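/- arXiv:2211.15237 — 7 statements merged into one kernel-verified Lean document; each statement's English description precedes it below -/
import Mathlib

section
/- Let M ≥ 2 and let X = {x_1, …, x_M} be a set of M distinct points in ℝ^d, and let z ∈ ℝ^d \ X. Then for every j ∈ {1, …, M}: F(X) − F({z} ∪ X \ {x_j}) = (M+1)·(‖x_j − (z+Σ(X))/(M+1)‖² − ‖z − (z+Σ(X))/(M+1)‖²), and also F(X) − F({z} ∪ X \ {x_j}) = (M−1)·(‖x_j − (Σ(X)−x_j)/(M−1)‖² − ‖z − (Σ(X)−x_j)/(M−1)‖²). -/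
/-!
Write `F(X) = M ∑ ‖x‖² - ‖Σ(X)‖²`. Replacing `x_j` by `z` keeps `M`, so with `T = Σ(X) - x_j`
the decrease is `(M - 1)(‖x_j‖² - ‖z‖²) - 2⟪x_j - z, T⟫`. Both right-hand sides reduce to this
via `k (‖a - v/k‖² - ‖b - v/k‖²) = k (‖a‖² - ‖b‖²) - 2⟪a - b, v⟫`, taken with `k = M + 1`,
`v = z + Σ(X)` and with `k = M - 1`, `v = T`.
-/

open Finset Metric MeasureTheory
open scoped BigOperators ENNReal RealInnerProductSpace

noncomputable section

instance {d : ℕ} : DecidableEq (EuclideanSpace ℝ (Fin d)) := Classical.decEq _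

/-- `E d` is the Euclidean space `ℝ^d`. -/
abbrev E (d : ℕ) : Type := EuclideanSpace ℝ (Fin d)

/-- `Σ(X)`, the sum of the points of `X`. -/
def csum {d : ℕ} (X : Finset (E d)) : E d := ∑ x ∈ X, x

/-- `μ(X)`, the center of mass of `X`. -/
def cm {d : ℕ} (X : Finset (E d)) : E d := (X.card : ℝ)⁻¹ • csum X

/-- `F(X) = Σ_{i<j} ‖x_i - x_j‖²`, the moment of inertia of `X`. -/
def inertia {d : ℕ} (X : Finset (E d)) : ℝ := (∑ x ∈ X, ∑ y ∈ X, ‖x - y‖ ^ 2) / 2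

/-- `A(X) = max_{w ∈ X} ‖w - μ(X)‖`. -/
def Amax {d : ℕ} (X : Finset (E d)) : ℝ := sSup ((fun w => ‖w - cm X‖) '' (X : Set (E d)))

/-- `D(X) = max_{i ≠ j} ‖x_i - x_j‖`. -/
def Dmax {d : ℕ} (X : Finset (E d)) : ℝ :=
  sSup {r : ℝ | ∃ x ∈ X, ∃ y ∈ X, x ≠ y ∧ r = ‖x - y‖}

/-- `d(X) = min_{i ≠ j} ‖x_i - x_j‖`. -/
def dmin {d : ℕ} (X : Finset (E d)) : ℝ :=
  sInf {r : ℝ | ∃ x ∈ X, ∃ y ∈ X, x ≠ y ∧ r = ‖x - y‖}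

/-- `Keep(X;B) = { x ∈ B : ‖x - μ({x} ∪ X)‖ < max_{s ∈ X} ‖s - μ({x} ∪ X)‖ }`. -/
def Keep {d : ℕ} (X : Finset (E d)) (B : Set (E d)) : Set (E d) :=
  {x ∈ B | ‖x - cm (insert x X)‖ <
    sSup ((fun s => ‖s - cm (insert x X)‖) '' (X : Set (E d)))}

/-- `V(k)`, the Lebesgue measure of the unit ball in `ℝ^k` (so `V 0 = 1`). -/
def ubVol (k : ℕ) : ℝ := (volume (Metric.ball (0 : EuclideanSpace ℝ (Fin k)) 1)).toReal

section InnerProductSpace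

variable {ι F : Type*} [NormedAddCommGroup F] [InnerProductSpace ℝ F]

theorem Finset.sum_sum_norm_sub_sq (s : Finset ι) (f : ι → F) :
    ∑ i ∈ s, ∑ j ∈ s, ‖f i - f j‖ ^ 2 =
      2 * (#s * ∑ i ∈ s, ‖f i‖ ^ 2 - ‖∑ i ∈ s, f i‖ ^ 2) := by
  simp_rw [norm_sub_sq_real, sum_add_distrib, sum_sub_distrib, sum_const, nsmul_eq_mul,
    ← mul_sum, ← inner_sum, ← sum_inner, real_inner_self_eq_norm_sq]
  ring

theorem mul_sub_norm_sub_inv_smul_sq {k : ℝ} (hk : k ≠ 0) (a b v : F) :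
    k * (‖a - k⁻¹ • v‖ ^ 2 - ‖b - k⁻¹ • v‖ ^ 2) =
      k * (‖a‖ ^ 2 - ‖b‖ ^ 2) - 2 * ⟪a - b, v⟫ := by
  rw [norm_sub_sq_real, norm_sub_sq_real, real_inner_smul_right, real_inner_smul_right,
    inner_sub_left]
  field_simp
  ring

end InnerProductSpace

theorem inertia_eq {d : ℕ} (X : Finset (E d)) :
    inertia X = #X * ∑ x ∈ X, ‖x‖ ^ 2 - ‖csum X‖ ^ 2 := by
  have h := sum_sum_norm_sub_sq X id
  simp only [id] at h
  rw [inertia, csum, h]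
  ring

theorem inertia_sub_inertia_insert_erase {d : ℕ} {X : Finset (E d)} {z xj : E d}
    (hz : z ∉ X.erase xj) (hxj : xj ∈ X) :
    inertia X - inertia (insert z (X.erase xj)) =
      (#X - 1) * (‖xj‖ ^ 2 - ‖z‖ ^ 2) - 2 * ⟪xj - z, csum X - xj⟫ := by
  have hcard : (#(insert z (X.erase xj)) : ℝ) = #X := by
    rw [card_insert_of_notMem hz, card_erase_add_one hxj]
  have hsum : csum (insert z (X.erase xj)) = z + (csum X - xj) := by
    rw [csum, csum, sum_insert hz, sum_erase_eq_sub hxj]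
  obtain ⟨T, hT⟩ : ∃ T, csum X = xj + T := ⟨_, (add_sub_cancel xj (csum X)).symm⟩
  rw [inertia_eq, inertia_eq, hcard, hsum, sum_insert hz, sum_erase_eq_sub hxj, hT,
    add_sub_cancel_left, norm_add_sq_real, norm_add_sq_real, inner_sub_left]
  ring

/-- Lemma 1 of the paper (equations (3) and (4)): the two expressions for the
decrease of the moment of inertia when `x_j` is replaced by `z`. -/
theorem stmt_0 (d : ℕ) (X : Finset (E d)) (hX : 2 ≤ X.card)
    (z : E d) (hz : z ∉ X) (xj : E d) (hxj : xj ∈ X) :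
    inertia X - inertia (insert z (X.erase xj)) =
      ((X.card : ℝ) + 1) *
        (‖xj - ((X.card : ℝ) + 1)⁻¹ • (z + csum X)‖ ^ 2 -
         ‖z - ((X.card : ℝ) + 1)⁻¹ • (z + csum X)‖ ^ 2) ∧
    inertia X - inertia (insert z (X.erase xj)) =
      ((X.card : ℝ) - 1) *
        (‖xj - ((X.card : ℝ) - 1)⁻¹ • (csum X - xj)‖ ^ 2 -
         ‖z - ((X.card : ℝ) - 1)⁻¹ • (csum X - xj)‖ ^ 2) := by
  have hM : (2 : ℝ) ≤ #X := by exact_mod_cast hX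
  rw [inertia_sub_inertia_insert_erase (fun h => hz (mem_of_mem_erase h)) hxj,
    mul_sub_norm_sub_inv_smul_sq (by linarith), mul_sub_norm_sub_inv_smul_sq (by linarith)]
  refine ⟨?_, rfl⟩
  have hsplit : z + csum X = (xj + z) + (csum X - xj) := by abel
  simp only [hsplit, inner_add_right, inner_sub_left, real_inner_self_eq_norm_sq]
  rw [real_inner_comm xj z]
  ring
end
end

section
/- Let B ⊆ ℝ^d be a convex body, let X = {x_1, …, x_M} be a set of M ≥ 2 distinct points of B, and let z ∈ Keep(X;B) with z ∉ X. Then any index j ∈ {1, …, M} which maximizes ‖x_j − (Σ(X)+z)/(M+1)‖ over j ∈ {1, …, M} also minimizes F({z} ∪ (X \ {x_j})) over j ∈ {1, …, M}. -/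
open Finset Metric MeasureTheory
open scoped BigOperators ENNReal RealInnerProductSpace

noncomputable section

/-!
Removing a point `x` from `S = X ∪ {z}` lowers the moment of inertia by `∑_{y ∈ S} ‖x - y‖²`,
and by the parallel axis theorem this equals `|S| ‖x - μ(S)‖² + ∑_{y ∈ S} ‖y - μ(S)‖²`, whose
second term does not depend on `x`. Since `z ∉ X`, `μ(S) = (Σ(X) + z)/(M + 1)`, so removing the
point of `X` farthest from it leaves the least inertia.
-/

lemma inertia_erase {d : ℕ} {S : Finset (E d)} {x : E d} (hx : x ∈ S) :
    inertia (S.erase x) = inertia S - ∑ y ∈ S, ‖x - y‖ ^ 2 := by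
  have h_row : ∑ y ∈ S.erase x, ‖y - x‖ ^ 2 = ∑ y ∈ S, ‖x - y‖ ^ 2 := by
    rw [← add_sum_erase S (fun y => ‖x - y‖ ^ 2) hx]
    simp [norm_sub_rev]
  have h_inner : ∀ a ∈ S.erase x, ∑ y ∈ S, ‖a - y‖ ^ 2
      = ‖a - x‖ ^ 2 + ∑ y ∈ S.erase x, ‖a - y‖ ^ 2 :=
    fun a _ => (add_sum_erase S _ hx).symm
  unfold inertia
  rw [← add_sum_erase S _ hx, sum_congr rfl h_inner, sum_add_distrib, h_row]
  ring

lemma sum_sub_cm_eq_zero {d : ℕ} {S : Finset (E d)} (hS : S.Nonempty) :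
    ∑ y ∈ S, (y - cm S) = 0 := by
  have hcard : (S.card : ℝ) ≠ 0 := by exact_mod_cast hS.card_ne_zero
  rw [sum_sub_distrib, sum_const, cm, csum, ← Nat.cast_smul_eq_nsmul ℝ, smul_smul,
    mul_inv_cancel₀ hcard, one_smul, sub_self]

lemma sum_norm_sub_sq_eq {d : ℕ} {S : Finset (E d)} (hS : S.Nonempty) (x : E d) :
    ∑ y ∈ S, ‖x - y‖ ^ 2 = S.card * ‖x - cm S‖ ^ 2 + ∑ y ∈ S, ‖y - cm S‖ ^ 2 := by
  have h_expand : ∀ y ∈ S, ‖x - y‖ ^ 2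
      = ‖x - cm S‖ ^ 2 - 2 * ⟪x - cm S, y - cm S⟫ + ‖y - cm S‖ ^ 2 := by
    intro y _
    rw [show x - y = (x - cm S) - (y - cm S) by abel, norm_sub_sq_real]
  rw [sum_congr rfl h_expand, sum_add_distrib, sum_sub_distrib, sum_const, ← mul_sum,
    ← inner_sum, sum_sub_cm_eq_zero hS, inner_zero_right, mul_zero, sub_zero, nsmul_eq_mul]

lemma inertia_erase_le_of_norm_sub_cm_le {d : ℕ} {S : Finset (E d)} {x y : E d}
    (hx : x ∈ S) (hy : y ∈ S) (hxy : ‖y - cm S‖ ≤ ‖x - cm S‖) :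
    inertia (S.erase x) ≤ inertia (S.erase y) := by
  have hS : S.Nonempty := ⟨x, hx⟩
  rw [inertia_erase hx, inertia_erase hy, sum_norm_sub_sq_eq hS, sum_norm_sub_sq_eq hS]
  have hsq : ‖y - cm S‖ ^ 2 ≤ ‖x - cm S‖ ^ 2 := pow_le_pow_left₀ (norm_nonneg _) hxy 2
  have := mul_le_mul_of_nonneg_left hsq (Nat.cast_nonneg (α := ℝ) S.card)
  linarith

lemma cm_insert {d : ℕ} {X : Finset (E d)} {z : E d} (hz : z ∉ X) :
    cm (insert z X) = ((X.card : ℝ) + 1)⁻¹ • (csum X + z) := by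
  rw [cm, csum, csum, sum_insert hz, card_insert_of_notMem hz, add_comm z]
  push_cast
  rfl

theorem stmt_2_general (d : ℕ)
    (X : Finset (E d))
    (z : E d) (hz : z ∉ X)
    (xj : E d) (hxj : xj ∈ X)
    (hmax : ∀ x ∈ X, ‖x - ((X.card : ℝ) + 1)⁻¹ • (csum X + z)‖ ≤
      ‖xj - ((X.card : ℝ) + 1)⁻¹ • (csum X + z)‖) :
    ∀ x ∈ X, inertia (insert z (X.erase xj)) ≤ inertia (insert z (X.erase x)) := by
  intro x hx
  have h_erase : ∀ w ∈ X, insert z (X.erase w) = (insert z X).erase w := fun w hw =>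
    (erase_insert_of_ne (ne_of_mem_of_not_mem hw hz).symm).symm
  rw [h_erase xj hxj, h_erase x hx]
  refine inertia_erase_le_of_norm_sub_cm_le (mem_insert_of_mem hxj) (mem_insert_of_mem hx) ?_
  rw [cm_insert hz]
  exact hmax x hx

/-- If `z ∈ Keep(X;B)`, then any `x_j ∈ X` maximizing `‖x_j - (Σ(X)+z)/(M+1)‖`
also minimizes `F({z} ∪ (X \ {x_j}))`. -/
theorem stmt_2 (d : ℕ) (B : Set (E d))
    (hBconv : Convex ℝ B) (hBcl : IsClosed B) (hBint : (interior B).Nonempty)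
    (X : Finset (E d)) (hX : 2 ≤ X.card) (hXB : ↑X ⊆ B)
    (z : E d) (hzK : z ∈ Keep X B) (hz : z ∉ X)
    (xj : E d) (hxj : xj ∈ X)
    (hmax : ∀ x ∈ X, ‖x - ((X.card : ℝ) + 1)⁻¹ • (csum X + z)‖ ≤
      ‖xj - ((X.card : ℝ) + 1)⁻¹ • (csum X + z)‖) :
    ∀ x ∈ X, inertia (insert z (X.erase xj)) ≤ inertia (insert z (X.erase x)) :=
  stmt_2_general d X z hz xj hxj hmax
end
end

section
/- Let B ⊆ ℝ^d be a convex body and let X be a set of M ≥ 2 distinct points of B. Then Keep(X;B) ⊆ B ∩ B( μ(X) , ((M+1)/(M−1))·A(X) ), where B(c,ρ) denotes the open Euclidean ball of radius ρ centered at c. -/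
open Finset Metric MeasureTheory
open scoped BigOperators ENNReal RealInnerProductSpace

noncomputable section

/-! Adding a point `x` to `X` moves the center of mass towards `x` by `1/(M+1)` of the distance
`‖x - μ(X)‖`. So if `x ∉ X` is kept, then `M/(M+1)·‖x - μ(X)‖ < A(X) + ‖x - μ(X)‖/(M+1)` by the
triangle inequality, i.e. `(M-1)·‖x - μ(X)‖ < (M+1)·A(X)`. -/

section CenterOfMass

variable {d : ℕ} {X : Finset (E d)} {x : E d}

lemma csum_eq_card_smul_cm (hX : X.Nonempty) : csum X = (X.card : ℝ) • cm X := by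
  rw [cm, smul_smul, mul_inv_cancel₀ (by simpa using hX.card_pos.ne'), one_smul]

lemma cm_insert_s4 (hX : X.Nonempty) (hx : x ∉ X) :
    cm (insert x X) = ((X.card : ℝ) + 1)⁻¹ • (x + (X.card : ℝ) • cm X) := by
  rw [cm, card_insert_of_notMem hx, csum, sum_insert hx, ← csum, csum_eq_card_smul_cm hX]
  push_cast
  rfl

lemma norm_sub_cm_insert (hX : X.Nonempty) (hx : x ∉ X) :
    ‖x - cm (insert x X)‖ = X.card * ‖x - cm X‖ / (X.card + 1) := by
  have hM : (X.card : ℝ) + 1 ≠ 0 := by positivity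
  have : x - cm (insert x X) = ((X.card : ℝ) / (X.card + 1)) • (x - cm X) := by
    rw [cm_insert_s4 hX hx]; match_scalars <;> field_simp; ring
  rw [this, norm_smul, Real.norm_of_nonneg (by positivity), div_mul_eq_mul_div]

lemma norm_cm_sub_cm_insert (hX : X.Nonempty) (hx : x ∉ X) :
    ‖cm X - cm (insert x X)‖ = ‖x - cm X‖ / (X.card + 1) := by
  have hM : (X.card : ℝ) + 1 ≠ 0 := by positivity
  have : cm X - cm (insert x X) = ((X.card : ℝ) + 1)⁻¹ • (cm X - x) := by
    rw [cm_insert_s4 hX hx]; match_scalars <;> field_simp; ring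
  rw [this, norm_smul, Real.norm_of_nonneg (by positivity), norm_sub_rev, inv_mul_eq_div]

lemma norm_sub_cm_le_Amax (hw : x ∈ X) : ‖x - cm X‖ ≤ Amax X :=
  le_csSup ((X.finite_toSet.image _).bddAbove) ⟨x, hw, rfl⟩

lemma sSup_norm_sub_le_Amax_add (hX : X.Nonempty) (c : E d) :
    sSup ((fun s => ‖s - c‖) '' (X : Set (E d))) ≤ Amax X + ‖cm X - c‖ := by
  refine csSup_le ((coe_nonempty.mpr hX).image _) ?_
  rintro _ ⟨s, hs, rfl⟩
  calc ‖s - c‖ ≤ ‖s - cm X‖ + ‖cm X - c‖ := norm_sub_le_norm_sub_add_norm_sub _ _ _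
    _ ≤ Amax X + ‖cm X - c‖ := by gcongr; exact norm_sub_cm_le_Amax hs

lemma sub_one_mul_norm_sub_cm_lt (hX : X.Nonempty) (hx : x ∉ X)
    (hkeep : ‖x - cm (insert x X)‖ <
      sSup ((fun s => ‖s - cm (insert x X)‖) '' (X : Set (E d)))) :
    ((X.card : ℝ) - 1) * ‖x - cm X‖ < ((X.card : ℝ) + 1) * Amax X := by
  have hlt := hkeep.trans_le (sSup_norm_sub_le_Amax_add hX _)
  rw [norm_sub_cm_insert hX hx, norm_cm_sub_cm_insert hX hx, div_lt_iff₀ (by positivity),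
    add_mul, div_mul_cancel₀ _ (by positivity)] at hlt
  linarith

end CenterOfMass

theorem stmt_4_general (d : ℕ) (B : Set (E d))
    (X : Finset (E d)) (hX : 2 ≤ X.card) :
    Keep X B ⊆ B ∩
      Metric.ball (cm X) ((((X.card : ℝ) + 1) / ((X.card : ℝ) - 1)) * Amax X) := by
  rintro x ⟨hxB, hkeep⟩
  refine ⟨hxB, ?_⟩
  have hX' : X.Nonempty := card_pos.mp (by omega)
  have hM : (1 : ℝ) < X.card := by exact_mod_cast hX
  rw [mem_ball, dist_eq_norm, div_mul_eq_mul_div, lt_div_iff₀ (by linarith)]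
  by_cases hx : x ∈ X
  · rw [insert_eq_self.mpr hx] at hkeep
    change ‖x - cm X‖ < Amax X at hkeep
    have hA : 0 ≤ Amax X := (norm_nonneg _).trans (norm_sub_cm_le_Amax hx)
    nlinarith [norm_nonneg (x - cm X)]
  · linarith [sub_one_mul_norm_sub_cm_lt hX' hx hkeep]

/-- Lemma 4 of the paper: `Keep(X;B) ⊆ B ∩ B(μ(X), ((M+1)/(M-1))·A(X))`. -/
theorem stmt_4 (d : ℕ) (B : Set (E d))
    (hBconv : Convex ℝ B) (hBcl : IsClosed B) (hBint : (interior B).Nonempty)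
    (X : Finset (E d)) (hX : 2 ≤ X.card) (hXB : ↑X ⊆ B) :
    Keep X B ⊆ B ∩
      Metric.ball (cm X) ((((X.card : ℝ) + 1) / ((X.card : ℝ) - 1)) * Amax X) :=
  stmt_4_general d B X hX
end
end

section
/- Let B ⊆ ℝ^d be a convex body and let X be a set of M ≥ 2 distinct points of B. Then B ∩ B( μ(X) , A(X) ) ⊆ Keep(X;B), where B(c,ρ) denotes the open Euclidean ball of radius ρ centered at c. -/
open Finset Metric MeasureTheory
open scoped BigOperators ENNReal RealInnerProductSpace

noncomputable section

/-!
Let `c = μ(X)`, `n = |X|` and `x ∉ X`. Adding `x` moves the center of mass to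
`m = c + (x - c)/(n + 1)`, so `‖x - m‖ = n‖x - c‖/(n + 1)`. If `w ∈ X` realises
`A(X) = ‖w - c‖ > ‖x - c‖`, the triangle inequality gives
`‖w - m‖ ≥ A(X) - ‖x - c‖/(n + 1) > ‖x - m‖`.
-/

section

variable {d : ℕ} {X : Finset (E d)} {x : E d}

lemma card_smul_cm (X : Finset (E d)) : (X.card : ℝ) • cm X = csum X := by
  rcases X.eq_empty_or_nonempty with rfl | hX
  · simp [csum]
  · exact smul_inv_smul₀ (by exact_mod_cast hX.card_pos.ne') _

lemma cm_insert_sub_cm (hx : x ∉ X) :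
    cm (insert x X) - cm X = ((X.card : ℝ) + 1)⁻¹ • (x - cm X) := by
  have hsum : cm (insert x X) = ((X.card : ℝ) + 1)⁻¹ • (x + (X.card : ℝ) • cm X) := by
    rw [card_smul_cm, cm, csum, card_insert_of_notMem hx, sum_insert hx]
    push_cast
    rfl
  rw [hsum]
  match_scalars <;> field_simp
  ring

lemma sub_cm_insert (hx : x ∉ X) :
    x - cm (insert x X) = ((X.card : ℝ) / ((X.card : ℝ) + 1)) • (x - cm X) := by
  have : x - cm (insert x X) = (x - cm X) - (cm (insert x X) - cm X) := by abel
  rw [this, cm_insert_sub_cm hx]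
  match_scalars <;> field_simp <;> ring

lemma exists_mem_norm_sub_cm_eq_Amax (hX : X.Nonempty) : ∃ w ∈ X, ‖w - cm X‖ = Amax X :=
  (hX.to_set.image _).csSup_mem ((X.finite_toSet).image _)

lemma norm_sub_cm_insert_lt (hX : X.Nonempty) (hx : x ∉ X) (hxA : ‖x - cm X‖ < Amax X) :
    ‖x - cm (insert x X)‖ < sSup ((fun s => ‖s - cm (insert x X)‖) '' (X : Set (E d))) := by
  obtain ⟨w, hwX, hwA⟩ := exists_mem_norm_sub_cm_eq_Amax hX
  set n : ℝ := (X.card : ℝ)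
  have hn : 0 < n + 1 := by positivity
  have hshift : ‖cm (insert x X) - cm X‖ = ‖x - cm X‖ / (n + 1) := by
    rw [cm_insert_sub_cm hx, norm_smul, norm_inv, Real.norm_of_nonneg hn.le, inv_mul_eq_div]
  have hxm : ‖x - cm (insert x X)‖ = ‖x - cm X‖ - ‖x - cm X‖ / (n + 1) := by
    rw [sub_cm_insert hx, norm_smul, Real.norm_of_nonneg (by positivity)]
    field_simp
    ring
  have hwm : ‖x - cm (insert x X)‖ < ‖w - cm (insert x X)‖ :=
    calc ‖x - cm (insert x X)‖ < ‖w - cm X‖ - ‖cm (insert x X) - cm X‖ := by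
          rw [hxm, hshift, hwA]; linarith
      _ ≤ ‖w - cm (insert x X)‖ := by
          have := norm_sub_le_norm_sub_add_norm_sub w (cm (insert x X)) (cm X)
          linarith
  exact hwm.trans_le (le_csSup ((X.finite_toSet).image _).bddAbove ⟨w, hwX, rfl⟩)

end

theorem stmt_5_general (d : ℕ) (B : Set (E d))
    (X : Finset (E d)) (hX : 2 ≤ X.card) :
    B ∩ Metric.ball (cm X) (Amax X) ⊆ Keep X B := by
  rintro x ⟨hxB, hxball⟩
  rw [mem_ball, dist_eq_norm] at hxball
  refine ⟨hxB, ?_⟩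
  by_cases hx : x ∈ X
  · rwa [insert_eq_self.mpr hx]
  · exact norm_sub_cm_insert_lt (card_pos.mp (by omega)) hx hxball

/-- Lemma 5 of the paper: `B ∩ B(μ(X), A(X)) ⊆ Keep(X;B)`. -/
theorem stmt_5 (d : ℕ) (B : Set (E d))
    (hBconv : Convex ℝ B) (hBcl : IsClosed B) (hBint : (interior B).Nonempty)
    (X : Finset (E d)) (hX : 2 ≤ X.card) (hXB : ↑X ⊆ B) :
    B ∩ Metric.ball (cm X) (Amax X) ⊆ Keep X B :=
  stmt_5_general d B X hX
end
end

section
/- Let d ≥ 1, let 0 < r < R, let B ⊆ ℝ^d be a convex body, and let y ∈ ℝ^d. Then λ( B(y,R) ∩ B ∩ N_r(B^c) ) ≤ 2·r·d·√d·V(d−1)·R^{d−1}, where V(d−1) is the Lebesgue measure of the unit ball in ℝ^{d−1}, with the convention V(0) = 1. -/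
/-!
Let `x ∈ B` lie within `r` of `Bᶜ`. Separating a nearby point of `Bᶜ` from `B` gives a normal
vector `v` with `⟪v, b - x⟫ < r ‖v‖` on `B`; some coordinate satisfies `‖v‖ ≤ √d |vᵢ|`, so
`x ± r√d eᵢ ∉ B` for a suitable sign. Hence the shell is covered by the `2d` sets of points of
`B` that leave `B` under a translation by `± r√d eᵢ`. Each line parallel to `eᵢ` meets `B` in
an interval, of which at most a piece of length `r√d` leaves it under such a translation, and the
lines meeting `B(y, R)` are parametrised by a ball of radius `R` in `ℝ^{d-1}`; by Fubini each of
the `2d` sets has volume at most `r√d V(d-1) R^{d-1}` inside `B(y, R)`.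
-/

open Finset Metric MeasureTheory
open scoped BigOperators ENNReal RealInnerProductSpace

noncomputable section

def exitSet {G : Type*} [Add G] (s : Set G) (v : G) : Set G := {x ∈ s | x + v ∉ s}

theorem MeasurableSet.exitSet {E : Type*} [NormedAddCommGroup E] [MeasurableSpace E]
    [BorelSpace E] {B : Set E} (hB : MeasurableSet B) (v : E) : MeasurableSet (exitSet B v) :=
  hB.inter (hB.compl.preimage (measurable_add_const v))

theorem Convex.volume_exitSet_le {I : Set ℝ} (hI : Convex ℝ I) (c : ℝ) :
    volume (exitSet I c) ≤ ENNReal.ofReal |c| := by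
  suffices h : ∀ s ∈ exitSet I c, ∀ t ∈ exitSet I c, s ≤ t → t - s ≤ |c| by
    refine (Real.volume_le_diam _).trans (Metric.ediam_le fun s hs t ht => ?_)
    rw [edist_dist, Real.dist_eq]
    refine ENNReal.ofReal_le_ofReal ?_
    rcases le_total s t with hst | hts
    · rw [abs_sub_comm, abs_of_nonneg (sub_nonneg.2 hst)]; exact h s hs t ht hst
    · rw [abs_of_nonneg (sub_nonneg.2 hts)]; exact h t ht s hs hts
  rintro s ⟨hs, hsc⟩ t ⟨ht, htc⟩ hst
  by_contra! hlt
  rcases le_total 0 c with hc | hc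
  · rw [abs_of_nonneg hc] at hlt
    exact hsc (hI.ordConnected.out hs ht ⟨by linarith, by linarith⟩)
  · rw [abs_of_nonpos hc] at hlt
    exact htc (hI.ordConnected.out hs ht ⟨by linarith, by linarith⟩)

theorem MeasureTheory.Measure.prod_apply_le_mul_of_slice_le {α β : Type*} [MeasurableSpace α]
    [MeasurableSpace β] {μ : Measure α} {ν : Measure β} [SFinite μ] [SFinite ν]
    {s : Set (α × β)} {K : Set β} {a : ℝ≥0∞} (hs : MeasurableSet s) (hK : MeasurableSet K)
    (hsK : ∀ p ∈ s, p.2 ∈ K) (hslice : ∀ b, μ ((·, b) ⁻¹' s) ≤ a) :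
    μ.prod ν s ≤ a * ν K := by
  rw [Measure.prod_apply_symm hs, ← lintegral_indicator_const hK]
  refine lintegral_mono fun b => ?_
  by_cases hb : b ∈ K
  · simpa [hb] using hslice b
  · have : (·, b) ⁻¹' s = ∅ := Set.eq_empty_of_forall_notMem fun t ht => hb (hsK _ ht)
    simp [this]

namespace EuclideanSpace

variable {n : ℕ} (i : Fin (n + 1))

def insertNthEquiv : ℝ × EuclideanSpace ℝ (Fin n) ≃ᵐ EuclideanSpace ℝ (Fin (n + 1)) :=
  ((MeasurableEquiv.refl ℝ).prodCongr (MeasurableEquiv.toLp 2 (Fin n → ℝ)).symm).trans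
    ((MeasurableEquiv.piFinSuccAbove (fun _ => ℝ) i).symm.trans (MeasurableEquiv.toLp 2 _))

theorem insertNthEquiv_apply (t : ℝ) (z : EuclideanSpace ℝ (Fin n)) :
    insertNthEquiv i (t, z) = WithLp.toLp 2 (Fin.insertNth i t z.ofLp) := rfl

theorem measurePreserving_insertNthEquiv : MeasurePreserving (insertNthEquiv i) := by
  refine (PiLp.volume_preserving_toLp _).comp
    ((volume_preserving_piFinSuccAbove (fun _ => ℝ) i).symm.comp ?_)
  exact (MeasurePreserving.id volume).prod (PiLp.volume_preserving_ofLp _)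

theorem insertNthEquiv_add_single (t c : ℝ) (z : EuclideanSpace ℝ (Fin n)) :
    insertNthEquiv i (t, z) + single i c = insertNthEquiv i (t + c, z) := by
  ext j
  rcases Fin.eq_self_or_eq_succAbove i j with rfl | ⟨j, rfl⟩
  · simp [insertNthEquiv_apply]
  · simp [insertNthEquiv_apply, Fin.succAbove_ne]

theorem dist_le_dist_insertNthEquiv (s t : ℝ) (z w : EuclideanSpace ℝ (Fin n)) :
    dist z w ≤ dist (insertNthEquiv i (s, z)) (insertNthEquiv i (t, w)) := by
  rw [dist_eq, dist_eq, Fin.sum_univ_succAbove _ i]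
  refine Real.sqrt_le_sqrt (le_add_of_nonneg_of_le (sq_nonneg _) (le_of_eq ?_))
  simp [insertNthEquiv_apply]

theorem convex_setOf_insertNthEquiv_mem {B : Set (EuclideanSpace ℝ (Fin (n + 1)))}
    (hB : Convex ℝ B) (z : EuclideanSpace ℝ (Fin n)) :
    Convex ℝ {t | insertNthEquiv i (t, z) ∈ B} := by
  intro s hs t ht a b ha hb hab
  show insertNthEquiv i (a • s + b • t, z) ∈ B
  convert hB hs ht ha hb hab using 1
  ext j
  rcases Fin.eq_self_or_eq_succAbove i j with rfl | ⟨j, rfl⟩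
  · simp [insertNthEquiv_apply]
  · simp [insertNthEquiv_apply, ← add_mul, hab]

end EuclideanSpace

theorem volume_ball_eq_ubVol {n : ℕ} (z : EuclideanSpace ℝ (Fin n)) {R : ℝ} (hR : 0 < R) :
    volume (ball z R) = ENNReal.ofReal (ubVol n * R ^ n) := by
  rw [Measure.addHaar_ball_of_pos _ _ hR, finrank_euclideanSpace_fin, ubVol,
    ENNReal.ofReal_mul ENNReal.toReal_nonneg, ENNReal.ofReal_toReal measure_ball_lt_top.ne,
    mul_comm]

theorem Convex.volume_ball_inter_exitSet_single_le {n : ℕ}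
    {B : Set (EuclideanSpace ℝ (Fin (n + 1)))} (hB : Convex ℝ B) (hBm : MeasurableSet B)
    (i : Fin (n + 1)) (c : ℝ)
    (y : EuclideanSpace ℝ (Fin (n + 1))) {R : ℝ} (hR : 0 < R) :
    volume (ball y R ∩ exitSet B (EuclideanSpace.single i c)) ≤
      ENNReal.ofReal (|c| * (ubVol n * R ^ n)) := by
  set e := EuclideanSpace.insertNthEquiv i
  rw [ENNReal.ofReal_mul (abs_nonneg c),
    ← (EuclideanSpace.measurePreserving_insertNthEquiv i).measure_preimage_equiv,
    ← volume_ball_eq_ubVol (e.symm y).2 hR, Measure.volume_eq_prod]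
  refine Measure.prod_apply_le_mul_of_slice_le
    (e.measurable (measurableSet_ball.inter (hBm.exitSet _))) measurableSet_ball ?_ fun z => ?_
  · rintro ⟨t, z⟩ ⟨hball, -⟩
    rw [mem_ball] at hball ⊢
    rw [← e.apply_symm_apply y] at hball
    exact (EuclideanSpace.dist_le_dist_insertNthEquiv i _ _ _ _).trans_lt hball
  · refine (measure_mono fun t ht => ?_).trans
      ((EuclideanSpace.convex_setOf_insertNthEquiv_mem i hB z).volume_exitSet_le c)
    obtain ⟨-, htB, htc⟩ := ht
    exact ⟨htB, by rwa [Set.mem_ofPred_eq, ← EuclideanSpace.insertNthEquiv_add_single]⟩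

theorem Convex.exists_inner_sub_lt_of_mem_thickening_compl {E : Type*} [NormedAddCommGroup E]
    [InnerProductSpace ℝ E] [CompleteSpace E] {B : Set E} (hB : Convex ℝ B) (hBc : IsClosed B)
    {r : ℝ} {x : E} (hx : x ∈ Metric.thickening r Bᶜ) :
    ∃ v : E, ∀ b ∈ B, ⟪v, b - x⟫ < r * ‖v‖ := by
  obtain ⟨z, hzB, hxz⟩ := mem_thickening_iff.1 hx
  obtain ⟨f, u, hfB, hfz⟩ := geometric_hahn_banach_closed_point hB hBc hzB
  set v := (InnerProductSpace.toDual ℝ E).symm f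
  have hv : ∀ w, ⟪v, w⟫ = f w := fun w => InnerProductSpace.toDual_symm_apply
  refine ⟨v, fun b hb => ?_⟩
  calc ⟪v, b - x⟫ < ⟪v, z - x⟫ := by simp only [hv, map_sub]; linarith [hfB b hb]
    _ ≤ ‖v‖ * ‖z - x‖ := real_inner_le_norm _ _
    _ ≤ r * ‖v‖ := by
      rw [mul_comm, ← dist_eq_norm, dist_comm]
      exact mul_le_mul_of_nonneg_right hxz.le (norm_nonneg v)

theorem EuclideanSpace.exists_norm_le_sqrt_card_mul_abs {ι : Type*} [Fintype ι] [Nonempty ι]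
    (v : EuclideanSpace ℝ ι) : ∃ i, ‖v‖ ≤ √(Fintype.card ι) * |v i| := by
  obtain ⟨i, hi⟩ := Finite.exists_max fun j => |v j|
  refine ⟨i, ?_⟩
  rw [EuclideanSpace.norm_eq, ← Real.sqrt_sq (abs_nonneg (v i)), ← Real.sqrt_mul (by positivity)]
  refine Real.sqrt_le_sqrt ?_
  calc ∑ j, ‖v j‖ ^ 2 ≤ ∑ _j : ι, |v i| ^ 2 :=
        Finset.sum_le_sum fun j _ => pow_le_pow_left₀ (norm_nonneg _) (hi j) 2
    _ = Fintype.card ι * |v i| ^ 2 := by simp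

theorem Convex.inter_thickening_compl_subset_iUnion_exitSet {ι : Type*} [Fintype ι]
    [DecidableEq ι] [Nonempty ι] {B : Set (EuclideanSpace ℝ ι)} (hB : Convex ℝ B)
    (hBc : IsClosed B) (r : ℝ) :
    B ∩ Metric.thickening r Bᶜ ⊆
      ⋃ i, (exitSet B (EuclideanSpace.single i (r * √(Fintype.card ι))) ∪
        exitSet B (EuclideanSpace.single i (-(r * √(Fintype.card ι))))) := by
  rintro x ⟨hxB, hx⟩
  have hr : 0 ≤ r := by
    by_contra! hr
    simp [Metric.thickening_of_nonpos hr.le] at hx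
  obtain ⟨v, hv⟩ := hB.exists_inner_sub_lt_of_mem_thickening_compl hBc hx
  obtain ⟨i, hi⟩ := EuclideanSpace.exists_norm_le_sqrt_card_mul_abs v
  have hexit : ∀ c, r * √(Fintype.card ι) * |v i| ≤ c * v i →
      x ∈ exitSet B (EuclideanSpace.single i c) := fun c hc => ⟨hxB, fun hmem => by
    have := hv _ hmem
    rw [add_sub_cancel_left, EuclideanSpace.inner_single_right] at this
    simp only [RCLike.conj_to_real] at this
    nlinarith [mul_le_mul_of_nonneg_left hi hr]⟩
  refine Set.mem_iUnion.2 ⟨i, ?_⟩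
  rcases le_total 0 (v i) with hvi | hvi
  · exact Or.inl (hexit _ (by rw [abs_of_nonneg hvi]))
  · exact Or.inr (hexit _ (le_of_eq (by rw [abs_of_nonpos hvi]; ring)))

theorem stmt_10_general (d : ℕ) (hd : 1 ≤ d) (r R : ℝ) (hr : 0 < r) (hrR : r < R)
    (B : Set (E d))
    (hBconv : Convex ℝ B) (hBcl : IsClosed B)
    (y : E d) :
    volume (Metric.ball y R ∩ B ∩ Metric.thickening r Bᶜ) ≤
      ENNReal.ofReal
        (2 * r * (d : ℝ) * Real.sqrt d * ubVol (d - 1) * R ^ (d - 1)) := by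
  obtain ⟨n, rfl⟩ : ∃ n, d = n + 1 := ⟨d - 1, by omega⟩
  set a := r * √((n + 1 : ℕ) : ℝ)
  have ha : 0 ≤ a := by positivity
  have hV : 0 ≤ a * (ubVol n * R ^ n) := by
    have : 0 ≤ ubVol n := ENNReal.toReal_nonneg
    have : 0 ≤ R := (hr.trans hrR).le
    positivity
  have hslab := fun i c =>
    hBconv.volume_ball_inter_exitSet_single_le hBcl.measurableSet i c y (hr.trans hrR)
  have hcover := hBconv.inter_thickening_compl_subset_iUnion_exitSet hBcl r
  rw [Fintype.card_fin] at hcover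
  calc volume (ball y R ∩ B ∩ thickening r Bᶜ)
      ≤ volume (⋃ i, (ball y R ∩ exitSet B (EuclideanSpace.single i a) ∪
          ball y R ∩ exitSet B (EuclideanSpace.single i (-a)))) := by
        refine measure_mono ?_
        simp only [← Set.inter_union_distrib_left, ← Set.inter_iUnion, Set.inter_assoc]
        exact Set.inter_subset_inter_right _ hcover
    _ ≤ ∑ _i : Fin (n + 1), (ENNReal.ofReal (|a| * (ubVol n * R ^ n)) +
          ENNReal.ofReal (|-a| * (ubVol n * R ^ n))) :=
        (measure_iUnion_fintype_le _ _).trans (Finset.sum_le_sum fun i _ =>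
          (measure_union_le _ _).trans (add_le_add (hslab i a) (hslab i (-a))))
    _ = _ := by
      rw [abs_neg, abs_of_nonneg ha, Finset.sum_const, Finset.card_univ, Fintype.card_fin,
        nsmul_eq_mul, ← ENNReal.ofReal_add hV hV, ← ENNReal.ofReal_natCast,
        ← ENNReal.ofReal_mul (by positivity), Nat.add_sub_cancel]
      congr 1
      ring

/-- Lemma 9 of the paper (chocolate-egg isoperimetric inequality, easy version):
the volume of the part of the inner `r`-shell of a convex body `B` inside a ball
of radius `R` is at most `2·r·d·√d·V(d-1)·R^{d-1}`. -/
theorem stmt_10 (d : ℕ) (hd : 1 ≤ d) (r R : ℝ) (hr : 0 < r) (hrR : r < R)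
    (B : Set (E d))
    (hBconv : Convex ℝ B) (hBcl : IsClosed B) (hBint : (interior B).Nonempty)
    (y : E d) :
    volume (Metric.ball y R ∩ B ∩ Metric.thickening r Bᶜ) ≤
      ENNReal.ofReal
        (2 * r * (d : ℝ) * Real.sqrt d * ubVol (d - 1) * R ^ (d - 1)) :=
  stmt_10_general d hd r R hr hrR B hBconv hBcl y
end
end

section
/- Let d ≥ 1, let 0 < r < R, let B ⊆ ℝ^d be a convex body, and let x ∈ ℝ^d. Then λ( B(x,R) ∩ B ∩ N_r(B^c) ) ≤ V(d)·(R^d − (R−r)^d), where V(d) is the Lebesgue measure of the unit ball in ℝ^d. -/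
/-!
Let `δ` be the signed distance to `B`, positive inside. It is concave: at a point `y` off the
(null) frontier of `B`, a supporting halfspace of `B` at the point of `∂B` nearest to `y` gives a
unit vector `u` with `δ z ≤ δ y - ⟪u, z - y⟫` for all `z`. Truncating `δ` at height `r`
keeps this with `u` replaced by `0` where `δ ≥ r`. Calling the resulting field `W`, the map
`y ↦ y + r • W y` is the identity plus a monotone field, hence expands distances, and it sends
`B(x, R - r)` into `B(x, R)` while avoiding the shell `B ∩ N_r(Bᶜ) = {0 ≤ δ < r}`: points with
`δ ≥ r` stay put and the others are pushed a distance `r` along `u`, to `δ < 0`. An expanding map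
does not decrease Lebesgue measure, so `λ(B(x, R - r)) + λ(B(x, R) ∩ shell) ≤ λ(B(x, R))`.
-/

open Finset Metric MeasureTheory
open scoped BigOperators ENNReal RealInnerProductSpace

noncomputable section

section ExpandingMap

variable {V : Type*} [NormedAddCommGroup V] [NormedSpace ℝ V] [FiniteDimensional ℝ V]
  [MeasurableSpace V] [BorelSpace V]

/-- An additive Haar measure is a multiple of the top-dimensional Hausdorff measure, which does
not increase under the `1`-Lipschitz inverse of an expanding map. -/
theorem MeasureTheory.Measure.addHaar_le_addHaar_image_of_expanding (μ : Measure V)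
    [μ.IsAddHaarMeasure] {s : Set V} {f : V → V}
    (hf : ∀ y ∈ s, ∀ z ∈ s, dist y z ≤ dist (f y) (f z)) : μ s ≤ μ (f '' s) := by
  have hinj : Set.InjOn f s := fun y hy z hz hyz =>
    dist_le_zero.mp (by simpa [hyz] using hf y hy z hz)
  have hinv : Set.LeftInvOn (Function.invFunOn f s) f s := hinj.leftInvOn_invFunOn
  have hlip : LipschitzOnWith 1 (Function.invFunOn f s) (f '' s) := by
    refine LipschitzOnWith.of_dist_le_mul fun a ha b hb => ?_
    obtain ⟨y, hy, rfl⟩ := ha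
    obtain ⟨z, hz, rfl⟩ := hb
    simpa [hinv hy, hinv hz] using hf y hy z hz
  have hH : μH[Module.finrank ℝ V] s ≤ μH[Module.finrank ℝ V] (f '' s) := by
    simpa [hinv.image_image] using hlip.hausdorffMeasure_image_le (Nat.cast_nonneg _)
  rw [μ.isAddLeftInvariant_eq_smul μH[Module.finrank ℝ V]]
  exact mul_le_mul_right hH _

end ExpandingMap

def signedInfDist {α : Type*} [PseudoMetricSpace α] (y : α) (s : Set α) : ℝ :=
  infDist y sᶜ - infDist y s

theorem signedInfDist_nonneg_and_lt_of_mem_thickening {α : Type*} [PseudoMetricSpace α]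
    {s : Set α} {y : α} {r : ℝ} (hy : y ∈ s)
    (hy' : y ∈ thickening r sᶜ) : 0 ≤ signedInfDist y s ∧ signedInfDist y s < r := by
  have hsc : sᶜ.Nonempty := (thickening_nonempty_iff.mp ⟨y, hy'⟩).2
  rw [signedInfDist, infDist_zero_of_mem hy, sub_zero]
  exact ⟨infDist_nonneg, (mem_thickening_iff_infDist_lt hsc).mp hy'⟩

section Supergradient

variable {V : Type*} [NormedAddCommGroup V] [InnerProductSpace ℝ V] {s : Set V} {u p : V}

theorem inner_sub_le_infDist (hs : s.Nonempty) (hu : ‖u‖ ≤ 1)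
    (hp : ∀ b ∈ s, ⟪u, b - p⟫ ≤ 0) (z : V) : ⟪u, z - p⟫ ≤ infDist z s := by
  refine (le_infDist hs).mpr fun b hb => ?_
  calc ⟪u, z - p⟫ = ⟪u, z - b⟫ + ⟪u, b - p⟫ := by
        rw [← inner_add_right, sub_add_sub_cancel]
    _ ≤ ‖u‖ * ‖z - b‖ + 0 := add_le_add (real_inner_le_norm _ _) (hp b hb)
    _ ≤ dist z b := by
        rw [add_zero, dist_eq_norm]
        exact mul_le_of_le_one_left (norm_nonneg _) hu

theorem infDist_compl_le_neg_inner (hu : ‖u‖ = 1) (hp : ∀ b ∈ s, ⟪u, b - p⟫ ≤ 0)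
    {z : V} (hz : z ∈ s) : infDist z sᶜ ≤ -⟪u, z - p⟫ := by
  refine le_of_forall_pos_le_add fun ε hε => ?_
  set c := -⟪u, z - p⟫ + ε
  have hc : 0 < c := by linarith [hp z hz]
  have hout : z + c • u ∈ sᶜ := fun hin => by
    have h := hp _ hin
    rw [add_sub_right_comm, inner_add_right, real_inner_smul_right,
      real_inner_self_eq_norm_sq, hu] at h
    linarith
  calc infDist z sᶜ ≤ dist z (z + c • u) := infDist_le_dist_of_mem hout
    _ = c := by rw [dist_self_add_right, norm_smul, hu, mul_one, Real.norm_of_nonneg hc.le]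

theorem signedInfDist_le_neg_inner (hs : s.Nonempty) (hu : ‖u‖ = 1)
    (hp : ∀ b ∈ s, ⟪u, b - p⟫ ≤ 0) (z : V) : signedInfDist z s ≤ -⟪u, z - p⟫ := by
  by_cases hz : z ∈ s
  · rw [signedInfDist, infDist_zero_of_mem hz, sub_zero]
    exact infDist_compl_le_neg_inner hu hp hz
  · rw [signedInfDist, infDist_zero_of_mem (show z ∈ sᶜ from hz), zero_sub, neg_le_neg_iff]
    exact inner_sub_le_infDist hs hu.le hp z

theorem signedInfDist_le_sub_inner_of_halfspace (hs : s.Nonempty) (hu : ‖u‖ = 1)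
    (hp : ∀ b ∈ s, ⟪u, b - p⟫ ≤ 0) {y : V} (hy : -⟪u, y - p⟫ ≤ signedInfDist y s) (z : V) :
    signedInfDist z s ≤ signedInfDist y s - ⟪u, z - y⟫ := by
  have h := signedInfDist_le_neg_inner hs hu hp z
  rw [← sub_add_sub_cancel z y p, inner_add_right] at h
  linarith

theorem exists_unit_supergradient_signedInfDist_of_mem_interior [ProperSpace V]
    (hconv : Convex ℝ s) (hsc : sᶜ.Nonempty) {y : V} (hy : y ∈ interior s) :
    ∃ u : V, ‖u‖ = 1 ∧ ∀ z, signedInfDist z s ≤ signedInfDist y s - ⟪u, z - y⟫ := by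
  obtain ⟨p, hpcl, hyp⟩ := exists_mem_closure_infDist_eq_dist hsc y
  rw [closure_compl] at hpcl
  obtain ⟨f, hf0, hf⟩ := geometric_hahn_banach_of_nonempty_interior_point hconv hpcl ⟨y, hy⟩
  set w := (InnerProductSpace.toDual ℝ V).symm f
  have hw : w ≠ 0 := by simpa [w] using hf0
  refine ⟨‖w‖⁻¹ • w, by simp [norm_smul, hw], signedInfDist_le_sub_inner_of_halfspace (p := p)
    ⟨y, interior_subset hy⟩ (by simp [norm_smul, hw]) (fun b hb => ?_) ?_⟩
  · rw [real_inner_smul_left, inner_sub_right, InnerProductSpace.toDual_symm_apply,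
      InnerProductSpace.toDual_symm_apply]
    exact mul_nonpos_of_nonneg_of_nonpos (by positivity) (sub_nonpos.mpr (hf b hb))
  · rw [signedInfDist, infDist_zero_of_mem (interior_subset hy), sub_zero, hyp, dist_comm,
      dist_eq_norm, ← inner_neg_right, neg_sub]
    exact (real_inner_le_norm _ _).trans (by simp [norm_smul, hw])

theorem exists_unit_supergradient_signedInfDist_of_notMem [CompleteSpace V]
    (hconv : Convex ℝ s) (hcl : IsClosed s) (hs : s.Nonempty) {y : V} (hy : y ∉ s) :
    ∃ u : V, ‖u‖ = 1 ∧ ∀ z, signedInfDist z s ≤ signedInfDist y s - ⟪u, z - y⟫ := by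
  obtain ⟨p, hp, hproj⟩ := exists_norm_eq_iInf_of_complete_convex hs hcl.isComplete hconv y
  have hsupp := (norm_eq_iInf_iff_real_inner_le_zero hconv hp).mp hproj
  have hyp : 0 < ‖y - p‖ := norm_pos_iff.mpr (sub_ne_zero.mpr fun h => hy (h ▸ hp))
  refine ⟨‖y - p‖⁻¹ • (y - p), by simp [norm_smul, hyp.ne'],
    signedInfDist_le_sub_inner_of_halfspace (p := p) hs (by simp [norm_smul, hyp.ne'])
      (fun b hb => ?_) ?_⟩
  · rw [real_inner_smul_left]
    exact mul_nonpos_of_nonneg_of_nonpos (by positivity) (hsupp b hb)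
  · have hinner : ⟪‖y - p‖⁻¹ • (y - p), y - p⟫ = dist y p := by
      rw [real_inner_smul_left, real_inner_self_eq_norm_sq, dist_eq_norm]
      field_simp
    rw [signedInfDist, infDist_zero_of_mem (show y ∈ sᶜ from hy), zero_sub, neg_le_neg_iff,
      hinner]
    exact infDist_le_dist_of_mem hp

theorem exists_unit_supergradient_signedInfDist [ProperSpace V] (hconv : Convex ℝ s)
    (hcl : IsClosed s) (hs : s.Nonempty) (hsc : sᶜ.Nonempty) {y : V} (hy : y ∉ frontier s) :
    ∃ u : V, ‖u‖ = 1 ∧ ∀ z, signedInfDist z s ≤ signedInfDist y s - ⟪u, z - y⟫ := by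
  by_cases hys : y ∈ s
  · exact exists_unit_supergradient_signedInfDist_of_mem_interior hconv hsc
      (self_sdiff_frontier s ▸ ⟨hys, hy⟩)
  · exact exists_unit_supergradient_signedInfDist_of_notMem hconv hcl hs hys

end Supergradient

section InnerShell

variable {V : Type*} [NormedAddCommGroup V] [InnerProductSpace ℝ V]

theorem inner_sub_nonneg_of_supergradients {a b y z : V} {gy gz : ℝ}
    (hy : gz ≤ gy - ⟪a, z - y⟫) (hz : gy ≤ gz - ⟪b, y - z⟫) : 0 ≤ ⟪a - b, y - z⟫ := by
  have : ⟪a, z - y⟫ = -⟪a, y - z⟫ := by rw [← inner_neg_right, neg_sub]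
  rw [inner_sub_left]
  linarith

theorem dist_le_dist_add_smul_of_inner_nonneg {a b y z : V} {r : ℝ} (hr : 0 ≤ r)
    (h : 0 ≤ ⟪a - b, y - z⟫) : dist y z ≤ dist (y + r • a) (z + r • b) := by
  rw [dist_eq_norm, dist_eq_norm, ← sq_le_sq₀ (norm_nonneg _) (norm_nonneg _),
    show y + r • a - (z + r • b) = (y - z) + r • (a - b) by module, norm_add_sq_real,
    real_inner_smul_right, real_inner_comm]
  nlinarith [mul_nonneg hr h, sq_nonneg ‖r • (a - b)‖]

theorem min_le_min_sub_inner_ite {g : V → ℝ} {y u : V} (r : ℝ)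
    (h : ∀ z, g z ≤ g y - ⟪u, z - y⟫) (z : V) :
    min (g z) r ≤ min (g y) r - ⟪if r ≤ g y then 0 else u, z - y⟫ := by
  split_ifs with hy
  · rw [min_eq_right hy, inner_zero_left, sub_zero]
    exact min_le_right _ _
  · rw [min_eq_left (not_le.mp hy).le]
    exact (min_le_left _ _).trans (h z)

theorem addHaar_ball_le_addHaar_ball_diff_inner_shell [FiniteDimensional ℝ V]
    [MeasurableSpace V] [BorelSpace V] (μ : Measure V) [μ.IsAddHaarMeasure] {s : Set V}
    (hconv : Convex ℝ s) (hcl : IsClosed s) {r : ℝ} (hr : 0 ≤ r) (x : V) (R : ℝ) :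
    μ (ball x (R - r)) ≤ μ (ball x R \ (s ∩ thickening r sᶜ)) := by
  obtain hempty | ⟨y₀, hy₀, hy₀'⟩ := (s ∩ thickening r sᶜ).eq_empty_or_nonempty
  · rw [hempty, Set.sdiff_empty]
    exact measure_mono (ball_subset_ball (by linarith))
  have hsc : sᶜ.Nonempty := (thickening_nonempty_iff.mp ⟨y₀, hy₀'⟩).2
  choose! U hU1 hU using fun y (hy : y ∉ frontier s) =>
    exists_unit_supergradient_signedInfDist hconv hcl ⟨y₀, hy₀⟩ hsc hy
  set W : V → V := fun y => if r ≤ signedInfDist y s then 0 else U y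
  have hW : ∀ y ∉ frontier s, ∀ z, min (signedInfDist z s) r ≤
      min (signedInfDist y s) r - ⟪W y, z - y⟫ := fun y hy =>
    min_le_min_sub_inner_ite r (hU y hy)
  have hexpand : ∀ y ∉ frontier s, ∀ z ∉ frontier s,
      dist y z ≤ dist (y + r • W y) (z + r • W z) := fun y hy z hz =>
    dist_le_dist_add_smul_of_inner_nonneg hr
      (inner_sub_nonneg_of_supergradients (hW y hy z) (hW z hz y))
  have hmaps : ∀ y ∈ ball x (R - r) \ frontier s,
      y + r • W y ∈ ball x R \ (s ∩ thickening r sᶜ) := by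
    rintro y ⟨hyx, hy⟩
    by_cases hry : r ≤ signedInfDist y s
    · simp only [W, if_pos hry, smul_zero, add_zero]
      exact ⟨ball_subset_ball (by linarith) hyx, fun hshell =>
        (signedInfDist_nonneg_and_lt_of_mem_thickening hshell.1 hshell.2).2.not_ge hry⟩
    · simp only [W, if_neg hry]
      refine ⟨?_, fun hshell => ?_⟩
      · rw [mem_ball] at hyx ⊢
        calc dist (y + r • U y) x ≤ dist (y + r • U y) y + dist y x := dist_triangle _ _ _
          _ < r + (R - r) := by
            rw [dist_self_add_left, norm_smul, hU1 y hy, mul_one, Real.norm_of_nonneg hr]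
            linarith
          _ = R := by ring
      · have h := hU y hy (y + r • U y)
        rw [add_sub_cancel_left, real_inner_smul_right, real_inner_self_eq_norm_sq,
          hU1 y hy] at h
        have hnonneg := (signedInfDist_nonneg_and_lt_of_mem_thickening hshell.1 hshell.2).1
        linarith
  calc μ (ball x (R - r)) = μ (ball x (R - r) \ frontier s) :=
        (measure_sdiff_null (hconv.addHaar_frontier μ)).symm
    _ ≤ μ ((fun y => y + r • W y) '' (ball x (R - r) \ frontier s)) :=
        μ.addHaar_le_addHaar_image_of_expanding fun y hy z hz => hexpand y hy.2 z hz.2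
    _ ≤ μ (ball x R \ (s ∩ thickening r sᶜ)) :=
        measure_mono (Set.image_subset_iff.mpr hmaps)

end InnerShell

theorem volume_ball_eq_ubVol_mul {d : ℕ} (hd : 1 ≤ d) (x : E d) {ρ : ℝ} (hρ : 0 ≤ ρ) :
    volume (ball x ρ) = ENNReal.ofReal (ubVol d * ρ ^ d) := by
  have : Nontrivial (E d) :=
    Module.nontrivial_of_finrank_pos (R := ℝ) (by rw [finrank_euclideanSpace_fin]; exact hd)
  rw [Measure.addHaar_ball volume x hρ, finrank_euclideanSpace_fin, mul_comm, ubVol,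
    ENNReal.ofReal_mul ENNReal.toReal_nonneg, ENNReal.ofReal_toReal measure_ball_lt_top.ne]

theorem volume_ball_inter_le_of_volume_ball_le {d : ℕ} (hd : 1 ≤ d) {x : E d} {ρ R : ℝ}
    (hρ : 0 ≤ ρ) (hρR : ρ ≤ R) {T : Set (E d)} (hT : MeasurableSet T)
    (h : volume (ball x ρ) ≤ volume (ball x R \ T)) :
    volume (ball x R ∩ T) ≤ ENNReal.ofReal (ubVol d * (R ^ d - ρ ^ d)) := by
  have hsplit := measure_inter_add_sdiff (μ := volume) (ball x R) hT
  calc volume (ball x R ∩ T) = volume (ball x R) - volume (ball x R \ T) :=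
        ENNReal.eq_sub_of_add_eq
          ((measure_mono Set.sdiff_subset).trans_lt measure_ball_lt_top).ne hsplit
    _ ≤ volume (ball x R) - volume (ball x ρ) := tsub_le_tsub_left h _
    _ = ENNReal.ofReal (ubVol d * (R ^ d - ρ ^ d)) := by
        rw [volume_ball_eq_ubVol_mul hd x (hρ.trans hρR), volume_ball_eq_ubVol_mul hd x hρ,
          ← ENNReal.ofReal_sub _ (by unfold ubVol; positivity), mul_sub]

theorem stmt_11_general (d : ℕ) (hd : 1 ≤ d) (r R : ℝ) (hr : 0 < r) (hrR : r < R)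
    (B : Set (E d))
    (hBconv : Convex ℝ B) (hBcl : IsClosed B)
    (x : E d) :
    volume (Metric.ball x R ∩ B ∩ Metric.thickening r Bᶜ) ≤
      ENNReal.ofReal (ubVol d * (R ^ d - (R - r) ^ d)) := by
  rw [Set.inter_assoc]
  exact volume_ball_inter_le_of_volume_ball_le hd (by linarith) (by linarith)
    (hBcl.measurableSet.inter isOpen_thickening.measurableSet)
    (addHaar_ball_le_addHaar_ball_diff_inner_shell volume hBconv hBcl hr.le x R)

/-- Lemma 10 of the paper (sharp isoperimetric inequality for inner shells):
`λ(B(x,R) ∩ B ∩ N_r(Bᶜ)) ≤ V(d)·(R^d − (R−r)^d)`. -/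
theorem stmt_11 (d : ℕ) (hd : 1 ≤ d) (r R : ℝ) (hr : 0 < r) (hrR : r < R)
    (B : Set (E d))
    (hBconv : Convex ℝ B) (hBcl : IsClosed B) (hBint : (interior B).Nonempty)
    (x : E d) :
    volume (Metric.ball x R ∩ B ∩ Metric.thickening r Bᶜ) ≤
      ENNReal.ofReal (ubVol d * (R ^ d - (R - r) ^ d)) :=
  stmt_11_general d hd r R hr hrR B hBconv hBcl x
end
end

section
/- Let B ⊆ ℝ^d be a convex body and suppose r₀ > 0 is such that b := inf_{x ∈ B} λ(B(x,r₀) ∩ B) > 0. Let X be a set of M ≥ 2 distinct points of B with A(X) ≤ r₀. Then λ( Keep(X;B) ) ≥ (b / r₀^d) · A(X)^d. -/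
open Finset Metric MeasureTheory
open scoped BigOperators ENNReal RealInnerProductSpace

noncomputable section

/-!
Adding a point `x` to `X` moves the center of mass towards `x` by `‖x - μ(X)‖/(M+1)`. This
shrinks the distance from `x` by exactly that amount and the distance from a farthest point of `X`
by at most that amount, so every `x ∈ B` with `‖x - μ(X)‖ < A(X)` lies in `Keep(X;B)`. As
`μ(X) ∈ B` by convexity, the homothety with center `μ(X)` and ratio `A(X)/r₀` maps
`B(μ(X),r₀) ∩ B` into `B(μ(X),A(X)) ∩ B` and scales volume by `(A(X)/r₀)^d`.
-/

theorem Convex.addHaar_ball_inter_le {V : Type*} [NormedAddCommGroup V] [NormedSpace ℝ V]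
    [MeasurableSpace V] [BorelSpace V] [FiniteDimensional ℝ V] (μ : Measure V)
    [μ.IsAddHaarMeasure] {s : Set V} (hs : Convex ℝ s) {c : V} (hc : c ∈ s) {t : ℝ}
    (ht₀ : 0 < t) (ht₁ : t ≤ 1) (r : ℝ) :
    ENNReal.ofReal (t ^ Module.finrank ℝ V) * μ (ball c r ∩ s) ≤ μ (ball c (t * r) ∩ s) := by
  rw [← abs_of_pos (pow_pos ht₀ _), ← Measure.addHaar_image_homothety]
  refine measure_mono ?_
  rintro _ ⟨y, ⟨hy, hys⟩, rfl⟩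
  refine ⟨?_, ?_⟩
  · rw [mem_ball, dist_homothety_center, Real.norm_of_nonneg ht₀.le, dist_comm]
    exact mul_lt_mul_of_pos_left hy ht₀
  · rw [AffineMap.homothety_eq_lineMap]
    exact hs.lineMap_mem hc hys ⟨ht₀.le, ht₁⟩

namespace Configuration

variable {d : ℕ} {X : Finset (E d)}

theorem cm_mem_of_convex {s : Set (E d)} (hs : Convex ℝ s) (hX : X.Nonempty)
    (hXs : ↑X ⊆ s) : cm X ∈ s := by
  have hcard : (X.card : ℝ) ≠ 0 := by exact_mod_cast hX.card_pos.ne'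
  rw [cm, csum, Finset.smul_sum]
  refine hs.sum_mem (fun _ _ => by positivity) ?_ fun _ hi => hXs hi
  rw [Finset.sum_const, nsmul_eq_mul, mul_inv_cancel₀ hcard]

theorem cm_insert {x : E d} (hx : x ∉ X) (hX : X.Nonempty) :
    cm (insert x X) = cm X + ((X.card : ℝ) + 1)⁻¹ • (x - cm X) := by
  have hcard : (X.card : ℝ) ≠ 0 := by exact_mod_cast hX.card_pos.ne'
  have hsum : csum X = (X.card : ℝ) • cm X := by rw [cm, smul_inv_smul₀ hcard]
  have hcard₁ : (X.card : ℝ) + 1 ≠ 0 := by positivity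
  rw [cm, csum, Finset.sum_insert hx, Finset.card_insert_of_notMem hx, ← csum, hsum]
  push_cast
  match_scalars
  · field_simp
  · field_simp
    ring

theorem norm_sub_cm_le_Amax {s : E d} (hs : s ∈ X) : ‖s - cm X‖ ≤ Amax X :=
  le_csSup ((X.finite_toSet.image _).bddAbove) ⟨s, hs, rfl⟩

theorem exists_norm_sub_cm_eq_Amax (hX : X.Nonempty) : ∃ w ∈ X, ‖w - cm X‖ = Amax X :=
  (hX.to_set.image _).csSup_mem (X.finite_toSet.image _)

theorem Amax_pos (hX : 1 < X.card) : 0 < Amax X := by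
  obtain ⟨x, hx, y, hy, hxy⟩ := Finset.one_lt_card.mp hX
  by_contra! h
  have hcm : ∀ s ∈ X, s = cm X := fun s hs =>
    sub_eq_zero.mp (norm_le_zero_iff.mp ((norm_sub_cm_le_Amax hs).trans h))
  exact hxy ((hcm x hx).trans (hcm y hy).symm)

theorem norm_sub_cm_insert_lt {x w : E d} (hX : X.Nonempty) (hw : ‖w - cm X‖ = Amax X)
    (hx : ‖x - cm X‖ < Amax X) : ‖x - cm (insert x X)‖ < ‖w - cm (insert x X)‖ := by
  by_cases hxX : x ∈ X
  · rw [Finset.insert_eq_self.mpr hxX, hw]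
    exact hx
  set k : ℝ := ((X.card : ℝ) + 1)⁻¹
  have hk : 0 < k := by positivity
  have hshift : ‖cm (insert x X) - cm X‖ = k * ‖x - cm X‖ := by
    rw [cm_insert hxX hX, add_sub_cancel_left, norm_smul, Real.norm_of_nonneg hk.le]
  have hk₁ : k ≤ 1 := inv_le_one_of_one_le₀ (by simp)
  have hx' : ‖x - cm (insert x X)‖ = (1 - k) * ‖x - cm X‖ := by
    rw [cm_insert hxX hX, show x - (cm X + k • (x - cm X)) = (1 - k) • (x - cm X) by module,
      norm_smul, Real.norm_of_nonneg (by linarith)]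
  have hw' : ‖w - cm X‖ ≤ ‖w - cm (insert x X)‖ + ‖cm (insert x X) - cm X‖ :=
    norm_sub_le_norm_sub_add_norm_sub _ _ _
  linarith

theorem ball_cm_inter_subset_Keep (hX : X.Nonempty) (B : Set (E d)) :
    ball (cm X) (Amax X) ∩ B ⊆ Keep X B := by
  obtain ⟨w, hwX, hw⟩ := exists_norm_sub_cm_eq_Amax hX
  rintro x ⟨hx, hxB⟩
  rw [mem_ball, dist_eq_norm] at hx
  exact ⟨hxB, (norm_sub_cm_insert_lt hX hw hx).trans_le
    (le_csSup ((X.finite_toSet.image _).bddAbove) ⟨w, hwX, rfl⟩)⟩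

end Configuration

open Configuration in
theorem stmt_16_general (d : ℕ) (B : Set (E d))
    (hBconv : Convex ℝ B)
    (r₀ : ℝ) (hr₀ : 0 < r₀)
    (X : Finset (E d)) (hX : 2 ≤ X.card) (hXB : ↑X ⊆ B) (hA : Amax X ≤ r₀) :
    (⨅ x ∈ B, volume (Metric.ball x r₀ ∩ B)) *
        ENNReal.ofReal (Amax X ^ d / r₀ ^ d) ≤ volume (Keep X B) := by
  have hXne : X.Nonempty := Finset.card_pos.mp (by omega)
  have hcm : cm X ∈ B := cm_mem_of_convex hBconv hXne hXB
  have ht₀ : 0 < Amax X / r₀ := div_pos (Amax_pos hX) hr₀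
  have ht₁ : Amax X / r₀ ≤ 1 := (div_le_one hr₀).mpr hA
  calc (⨅ x ∈ B, volume (ball x r₀ ∩ B)) * ENNReal.ofReal (Amax X ^ d / r₀ ^ d)
      ≤ ENNReal.ofReal ((Amax X / r₀) ^ d) * volume (ball (cm X) r₀ ∩ B) := by
        rw [mul_comm, div_pow]
        gcongr
        exact biInf_le _ hcm
    _ ≤ volume (ball (cm X) (Amax X / r₀ * r₀) ∩ B) := by
        simpa only [finrank_euclideanSpace_fin] using
          hBconv.addHaar_ball_inter_le volume hcm ht₀ ht₁ r₀
    _ ≤ volume (Keep X B) := by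
        rw [div_mul_cancel₀ _ hr₀.ne']
        exact measure_mono (ball_cm_inter_subset_Keep hXne B)

/-- If `B` has uniform geometry with parameters `r₀` and
`b = inf_{x ∈ B} λ(B(x,r₀) ∩ B) > 0`, then for a configuration `X ⊆ B` with
`A(X) ≤ r₀` we have `λ(Keep(X;B)) ≥ (b / r₀^d) · A(X)^d`. -/
theorem stmt_16 (d : ℕ) (B : Set (E d))
    (hBconv : Convex ℝ B) (hBcl : IsClosed B) (hBint : (interior B).Nonempty)
    (r₀ : ℝ) (hr₀ : 0 < r₀)
    (hb : 0 < ⨅ x ∈ B, volume (Metric.ball x r₀ ∩ B))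
    (X : Finset (E d)) (hX : 2 ≤ X.card) (hXB : ↑X ⊆ B) (hA : Amax X ≤ r₀) :
    (⨅ x ∈ B, volume (Metric.ball x r₀ ∩ B)) *
        ENNReal.ofReal (Amax X ^ d / r₀ ^ d) ≤ volume (Keep X B) :=
  stmt_16_general d B hBconv r₀ hr₀ X hX hXB hA
end
end
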